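/- For every m ≥ 2 and all words s, ṡ ∈ {0,1}^m such that the cyclic binary word (s_1, …, s_m, ṡ_1, …, ṡ_m) of length 2m contains no two cyclically adjacent 1's, one has Σ_{i=1}^{m} [ A(flip_i s, ṡ) + A(s, flip_i ṡ) ] = 0. (Equivalently, ⟨c| H1 |Λ⟩ = 0 for every Rydberg-allowed configuration c of the periodic chain, so the volume-entangled state |Λ⟩ is an exact E = 0 eigenstate of the periodic PXP chain of length 2m.) -/

import Mathlib

/-!
Since `M^{01} = M^{10} = 0`, the amplitude `A(u, v)` vanishes unless `u = v`. Hence every term of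
the flip sum vanishes unless `ṡ` is obtained from `s` by flipping a single site `j`, and then the
sum is `A(s, s) + A(ṡ, ṡ)`. One of the two words carries a `1` at `j`, so the exclusion rule forces
both cyclic neighbours of `j` to be `0`. Rotating the trace so that `j` comes first, the sum becomes
`Tr((M^{00} + M^{11}) R)` with `R = M^{00} R M^{00}`, which vanishes because
`M^{00} (M^{00} + M^{11}) M^{00} = 0`.
-/

open Matrix

/-- The blocked-antipodal MPS tensors of the volume-entangled state `|Λ⟩` of
the PXP chain: `M^{00} = (1/2)[[1,1],[1,1]]`, `M^{11} = [[0,0],[−2,0]]`,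
`M^{01} = M^{10} = 0`. -/
noncomputable def MLam : Fin 2 → Fin 2 → Matrix (Fin 2) (Fin 2) ℂ :=
  ![![(1 / 2 : ℂ) • !![1, 1; 1, 1], 0],
    ![0, !![0, 0; -2, 0]]]

/-- The blocked-antipodal amplitude
`A(s, ṡ) = Tr(M^{s_1 ṡ_1} ⋯ M^{s_m ṡ_m})`. -/
noncomputable def ampLam {m : ℕ} (s t : Fin m → Fin 2) : ℂ :=
  Matrix.trace (List.ofFn fun i : Fin m => MLam (s i) (t i)).prod

theorem List.ofFn_rotate {α : Type*} {n : ℕ} (g : Fin n → α) (j : Fin n) :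
    (List.ofFn g).rotate j = List.ofFn fun i => g (i + j) := by
  apply List.ext_getElem (by simp)
  intro k _ _
  simp [List.getElem_rotate, Fin.add_def]

section Trace

variable {n R : Type*} [Fintype n] [DecidableEq n] [CommSemiring R]

theorem Matrix.trace_prod_rotate (l : List (Matrix n n R)) (k : ℕ) :
    trace (l.rotate k).prod = trace l.prod := by
  rw [List.rotate_eq_drop_append_take_mod, List.prod_append, trace_mul_comm, ← List.prod_append,
    List.take_append_drop]

theorem Matrix.trace_prod_ofFn_eq_trace_mul {k : ℕ} (g : Fin (k + 1) → Matrix n n R)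
    (j : Fin (k + 1)) :
    trace (List.ofFn g).prod = trace (g j * (List.ofFn fun i : Fin k => g (i.succ + j)).prod) := by
  rw [← trace_prod_rotate _ j, List.ofFn_rotate, List.ofFn_succ, List.prod_cons, zero_add]

theorem Matrix.trace_mul_eq_zero_of_sandwich {A P X : Matrix n n R} (hA : P * A * P = 0)
    (hleft : P * X = X) (hright : X * P = X) : trace (A * X) = 0 := by
  calc trace (A * X) = trace (A * (P * X * P)) := by rw [hleft, hright]
    _ = trace (P * A * P * X) := by
      rw [← mul_assoc, ← mul_assoc, trace_mul_comm, ← mul_assoc, ← mul_assoc]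
    _ = 0 := by rw [hA, zero_mul, trace_zero]

end Trace

theorem MLam_of_ne {a b : Fin 2} (h : a ≠ b) : MLam a b = 0 := by
  fin_cases a <;> fin_cases b <;> simp_all [MLam]

theorem MLam_zero_zero_mul_self : MLam 0 0 * MLam 0 0 = MLam 0 0 := by
  ext i j
  fin_cases i <;> fin_cases j <;> simp [MLam, Matrix.mul_apply] <;> norm_num

theorem MLam_zero_zero_sandwich : MLam 0 0 * (MLam 0 0 + MLam 1 1) * MLam 0 0 = 0 := by
  ext i j
  fin_cases i <;> fin_cases j <;> simp [MLam, Matrix.mul_apply] <;> norm_num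

theorem ampLam_eq_zero_of_ne {m : ℕ} {u v : Fin m → Fin 2} (h : u ≠ v) : ampLam u v = 0 := by
  obtain ⟨j, hj⟩ := Function.ne_iff.mp h
  have hzero : (0 : Matrix (Fin 2) (Fin 2) ℂ) ∈ List.ofFn fun i => MLam (u i) (v i) :=
    List.mem_ofFn.mpr ⟨j, MLam_of_ne hj⟩
  rw [ampLam, List.prod_eq_zero hzero, trace_zero]

theorem ampLam_update_zero_add_ampLam_update_one {k : ℕ} (w : Fin (k + 2) → Fin 2)
    (j : Fin (k + 2)) (hsucc : w (j + 1) = 0) (hpred : w (j - 1) = 0) :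
    ampLam (Function.update w j 0) (Function.update w j 0) +
      ampLam (Function.update w j 1) (Function.update w j 1) = 0 := by
  set X := (List.ofFn fun i : Fin (k + 1) => MLam (w (i.succ + j)) (w (i.succ + j))).prod with hX
  have hupdate (a : Fin 2) :
      ampLam (Function.update w j a) (Function.update w j a) = trace (MLam a a * X) := by
    have hrest (i : Fin (k + 1)) : Function.update w j a (i.succ + j) = w (i.succ + j) :=
      Function.update_of_ne (by simp) _ _
    rw [ampLam, trace_prod_ofFn_eq_trace_mul _ j, Function.update_self]
    simp only [hrest, X]
  have hleft : MLam 0 0 * X = X := by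
    rw [hX, List.ofFn_succ, List.prod_cons, Fin.succ_zero_eq_one, add_comm 1 j, hsucc,
      ← mul_assoc, MLam_zero_zero_mul_self]
  have hright : X * MLam 0 0 = X := by
    have hlast : (Fin.last k).succ + j = j - 1 := by
      rw [show (Fin.last k).succ = -1 by simp [Fin.ext_iff], neg_add_eq_sub]
    rw [hX, List.ofFn_succ', List.concat_eq_append, List.prod_append, List.prod_singleton, hlast,
      hpred, mul_assoc, MLam_zero_zero_mul_self]
  rw [hupdate, hupdate, ← trace_add, ← add_mul]
  exact trace_mul_eq_zero_of_sandwich MLam_zero_zero_sandwich hleft hright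

def flipAt {m : ℕ} (u : Fin m → Fin 2) (i : Fin m) : Fin m → Fin 2 :=
  Function.update u i (1 - u i)

theorem flipAt_flipAt {m : ℕ} (u : Fin m → Fin 2) (i : Fin m) : flipAt (flipAt u i) i = u := by
  rw [flipAt, flipAt, Function.update_idem, Function.update_self, sub_sub_cancel,
    Function.update_eq_self]

theorem flipAt_ne_flipAt {m : ℕ} (u : Fin m → Fin 2) {i j : Fin m} (h : i ≠ j) :
    flipAt u i ≠ flipAt u j := by
  intro heq
  have := congrFun heq i
  rw [flipAt, flipAt, Function.update_self, Function.update_of_ne h] at this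
  omega

section Exclusion

variable {k : ℕ} {s t : Fin (k + 2) → Fin 2} {j : Fin (k + 2)}

theorem eq_zero_at_succ_of_exclusion
    (hs : ∀ i : ℕ, ∀ h1 : i < k + 2, ∀ h2 : i + 1 < k + 2,
      ¬(s ⟨i, h1⟩ = 1 ∧ s ⟨i + 1, h2⟩ = 1))
    (hst : ¬(s ⟨k + 1, by omega⟩ = 1 ∧ t ⟨0, by omega⟩ = 1))
    (hsj : s j = 1) (hagree : ∀ i, i ≠ j → t i = s i) : t (j + 1) = 0 := by
  cases j using Fin.lastCases with
  | last =>
    have : t 0 ≠ 1 := fun h => hst ⟨hsj, h⟩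
    rw [Fin.last_add_one]
    omega
  | cast i =>
    rw [Fin.coeSucc_eq_succ, hagree _ (i.castSucc_lt_succ.ne')]
    have : s i.castSucc = 1 → s i.succ ≠ 1 := fun h1 h2 =>
      hs i i.castSucc.isLt i.succ.isLt ⟨h1, h2⟩
    omega

theorem eq_zero_at_pred_of_exclusion
    (hs : ∀ i : ℕ, ∀ h1 : i < k + 2, ∀ h2 : i + 1 < k + 2,
      ¬(s ⟨i, h1⟩ = 1 ∧ s ⟨i + 1, h2⟩ = 1))
    (hts : ¬(t ⟨k + 1, by omega⟩ = 1 ∧ s ⟨0, by omega⟩ = 1))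
    (hsj : s j = 1) (hagree : ∀ i, i ≠ j → t i = s i) : t (j - 1) = 0 := by
  cases j using Fin.cases with
  | zero =>
    have : t (Fin.last _) ≠ 1 := fun h => hts ⟨h, hsj⟩
    rw [sub_eq_of_eq_add (Fin.last_add_one _).symm]
    omega
  | succ i =>
    rw [sub_eq_of_eq_add Fin.coeSucc_eq_succ.symm, hagree _ (i.castSucc_lt_succ.ne)]
    have : s i.castSucc = 1 → s i.succ ≠ 1 := fun h1 h2 =>
      hs i i.castSucc.isLt i.succ.isLt ⟨h1, h2⟩
    omega

theorem ampLam_self_add_ampLam_self_of_exclusion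
    (hs : ∀ i : ℕ, ∀ h1 : i < k + 2, ∀ h2 : i + 1 < k + 2,
      ¬(s ⟨i, h1⟩ = 1 ∧ s ⟨i + 1, h2⟩ = 1))
    (hst : ¬(s ⟨k + 1, by omega⟩ = 1 ∧ t ⟨0, by omega⟩ = 1))
    (hts : ¬(t ⟨k + 1, by omega⟩ = 1 ∧ s ⟨0, by omega⟩ = 1))
    (hsj : s j = 1) (hflip : t = flipAt s j) :
    ampLam s s + ampLam t t = 0 := by
  have hagree (i) (hi : i ≠ j) : t i = s i := by rw [hflip, flipAt, Function.update_of_ne hi]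
  have htj : t j = 0 := by rw [hflip, flipAt, Function.update_self, hsj]; rfl
  have ht0 : t = Function.update t j 0 := by rw [← htj, Function.update_eq_self]
  have hs1 : s = Function.update t j 1 := by
    rw [hflip, flipAt, Function.update_idem, ← hsj, Function.update_eq_self]
  rw [add_comm, ht0, hs1]
  refine ampLam_update_zero_add_ampLam_update_one t j ?_ ?_
  · exact eq_zero_at_succ_of_exclusion hs hst hsj hagree
  · exact eq_zero_at_pred_of_exclusion hs hts hsj hagree

end Exclusion

/-- for every `m ≥ 2` and all words `s, ṡ` such that the cyclic
configuration `(s_1, …, s_m, ṡ_1, …, ṡ_m)` has no two cyclically adjacent 1's,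
the sum of all single-flip amplitudes of `|Λ⟩` vanishes; hence `|Λ⟩` is an
exact `E = 0` eigenstate of the periodic PXP chain of length `2m`. -/
theorem Lambda_flip_sum_eq_zero
    (m : ℕ) (hm : 2 ≤ m) (s t : Fin m → Fin 2)
    (hs : ∀ i : ℕ, ∀ h1 : i < m, ∀ h2 : i + 1 < m,
      ¬(s ⟨i, h1⟩ = 1 ∧ s ⟨i + 1, h2⟩ = 1))
    (ht : ∀ i : ℕ, ∀ h1 : i < m, ∀ h2 : i + 1 < m,
      ¬(t ⟨i, h1⟩ = 1 ∧ t ⟨i + 1, h2⟩ = 1))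
    (hst : ¬(s ⟨m - 1, by omega⟩ = 1 ∧ t ⟨0, by omega⟩ = 1))
    (hts : ¬(t ⟨m - 1, by omega⟩ = 1 ∧ s ⟨0, by omega⟩ = 1)) :
    ∑ i : Fin m,
      (ampLam (Function.update s i (1 - s i)) t +
       ampLam s (Function.update t i (1 - t i))) = 0 := by
  obtain ⟨k, rfl⟩ : ∃ k, m = k + 2 := ⟨m - 2, by omega⟩
  change ∑ i, (ampLam (flipAt s i) t + ampLam s (flipAt t i)) = 0
  by_cases hflip : ∃ j, t = flipAt s j
  · obtain ⟨j, htj⟩ := hflip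
    have hsj : s = flipAt t j := by rw [htj, flipAt_flipAt]
    rw [Finset.sum_eq_single j]
    · rw [← htj, ← hsj]
      obtain hs0 | hs1 : s j = 0 ∨ s j = 1 := by omega
      · exact ampLam_self_add_ampLam_self_of_exclusion ht hts hst (by simp [htj, flipAt, hs0]) hsj
      · rw [add_comm]
        exact ampLam_self_add_ampLam_self_of_exclusion hs hst hts hs1 htj
    · intro i _ hij
      rw [htj, ampLam_eq_zero_of_ne (flipAt_ne_flipAt s hij), ← htj, hsj,
        ampLam_eq_zero_of_ne (flipAt_ne_flipAt t hij).symm, add_zero]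
    · simp
  · refine Finset.sum_eq_zero fun i _ => ?_
    have hst_ne : flipAt s i ≠ t := fun h => hflip ⟨i, h.symm⟩
    have hts_ne : s ≠ flipAt t i := fun h => hflip ⟨i, by rw [h, flipAt_flipAt]⟩
    rw [ampLam_eq_zero_of_ne hst_ne, ampLam_eq_zero_of_ne hts_ne, add_zero]
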